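/- Let p be an odd prime. In SL₂(F_p), the matrix a = [[1,1],[0,1]] is conjugate to a^m = [[1,m],[0,1]] whichever m is a nonzero quadratic residue mod p. Consequently any unitary representation ρ of SL₂(F_p) in dimension d < (p−1)/2 satisfies ρ(a) = 1. -/

import Mathlib

/-!
Conjugating `a = [[1, 1], [0, 1]]` by `diag(t, t⁻¹)` gives `a ^ (t²)`. Hence if `ρ` is a unitary
representation and `μ` an eigenvalue of `ρ a`, then `μ ^ p = 1` and every `μ ^ m` with `m` a nonzero
square mod `p` is again an eigenvalue. If `μ ≠ 1` it is a primitive `p`-th root of unity, so these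
are at least `(p - 1) / 2` distinct eigenvalues, too many for dimension `d`. Thus all eigenvalues
of `ρ a` are `1`, and since `ρ a` is annihilated by the separable polynomial `X ^ p - 1`, `ρ a = 1`.
-/

/-- The upper unitriangular matrix `[[1, t], [0, 1]]` as an element of `SL₂`. -/
def upperUni (p : ℕ) [Fact p.Prime] (t : ZMod p) :
    Matrix.SpecialLinearGroup (Fin 2) (ZMod p) :=
  ⟨!![1, t; 0, 1], by simp [Matrix.det_fin_two_of]⟩

open Polynomial

lemma spectrum.eq_of_isConj {R A : Type*} [CommSemiring R] [Ring A] [Algebra R A] {a b : A}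
    (h : IsConj a b) : spectrum R a = spectrum R b := by
  obtain ⟨c, hc⟩ := h
  rw [← spectrum.units_conjugate (a := a) (u := c), hc.eq, Units.mul_inv_cancel_right]

lemma IsCyclic.card_le_two_mul_card_range_powMonoidHom_two {G : Type*} [CommGroup G] [IsCyclic G]
    [Finite G] : Nat.card G ≤ 2 * Nat.card (powMonoidHom 2 : G →* G).range := by
  rw [IsCyclic.card_powMonoidHom_range]
  calc Nat.card G = Nat.card G / (Nat.card G).gcd 2 * (Nat.card G).gcd 2 :=
        (Nat.div_mul_cancel (Nat.gcd_dvd_left _ _)).symm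
    _ ≤ Nat.card G / (Nat.card G).gcd 2 * 2 := Nat.mul_le_mul_left _ (Nat.gcd_le_right _ two_pos)
    _ = _ := mul_comm _ _

lemma eq_one_of_forall_isSquare_pow_mem {M : Type*} [CommMonoid M] {p : ℕ} [Fact p.Prime]
    {S : Set M} [Finite S] (hS : 2 * Nat.card S < p - 1) {μ : M} (hμ : μ ^ p = 1)
    (hsq : ∀ m : ZMod p, m ≠ 0 → IsSquare m → μ ^ m.val ∈ S) : μ = 1 := by
  by_contra hμ1
  have hprim : IsPrimitiveRoot μ p := IsPrimitiveRoot.iff_orderOf.2 (orderOf_eq_prime hμ hμ1)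
  let f : (powMonoidHom 2 : (ZMod p)ˣ →* (ZMod p)ˣ).range → S := fun s =>
    ⟨μ ^ ((s : (ZMod p)ˣ) : ZMod p).val, by
      obtain ⟨u, hu⟩ := s.2
      refine hsq _ s.1.ne_zero ⟨u, ?_⟩
      rw [← hu, powMonoidHom_apply, Units.val_pow_eq_pow_val, sq]⟩
  have hf : Function.Injective f := fun s t hst =>
    Subtype.ext <| Units.ext <| ZMod.val_injective p <|
      hprim.pow_inj (ZMod.val_lt _) (ZMod.val_lt _) (congrArg Subtype.val hst)
  have hsquares := IsCyclic.card_le_two_mul_card_range_powMonoidHom_two (G := (ZMod p)ˣ)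
  rw [Nat.card_eq_fintype_card (α := (ZMod p)ˣ), ZMod.card_units] at hsquares
  have := Nat.card_le_card_of_injective f hf
  omega

namespace Matrix

variable {n K : Type*} [Fintype n] [DecidableEq n] [Field K]

lemma card_spectrum_le (A : Matrix n n K) : Nat.card (spectrum K A) ≤ Fintype.card n := by
  classical
  have hspec : spectrum K A = (A.charpoly.roots.toFinset : Set K) := by
    ext μ
    simp [mem_spectrum_iff_isRoot_charpoly, A.charpoly_monic.ne_zero]
  rw [hspec, Nat.card_coe_set_eq, Set.ncard_coe_finset, ← A.charpoly_natDegree_eq_dim]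
  exact (Multiset.toFinset_card_le _).trans (card_roots' _)

lemma eq_one_of_pow_eq_one_of_spectrum_subset [IsAlgClosed K] {A : Matrix n n K} {k : ℕ}
    (hk : (k : K) ≠ 0) (hA : A ^ k = 1) (hspec : spectrum K A ⊆ {1}) : A = 1 := by
  set q := minpoly K A
  have hsep : q.Separable :=
    (separable_X_pow_sub_C 1 hk one_ne_zero).of_dvd (minpoly.dvd K A (by simp [hA]))
  have hroots : q.roots ≤ {1} := by
    refine (Multiset.le_iff_subset (nodup_roots hsep)).2 fun r hr => Multiset.mem_singleton.2 ?_
    refine hspec (mem_spectrum_iff_isRoot_charpoly.2 ?_)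
    exact (isRoot_of_mem_roots hr).dvd (minpoly_dvd_charpoly A)
  have hprod := (IsAlgClosed.splits q).eq_prod_roots_of_monic
    (minpoly.monic (Algebra.IsIntegral.isIntegral A))
  have hAq : aeval A q = 0 := minpoly.aeval K A
  rcases Multiset.le_singleton.1 hroots with h | h
  · simp only [h, Multiset.map_zero, Multiset.prod_zero] at hprod
    rw [hprod, map_one] at hAq
    exact eq_of_zero_eq_one hAq.symm _ _
  · simp only [h, Multiset.map_singleton, Multiset.prod_singleton] at hprod
    rwa [hprod, map_sub, aeval_X, aeval_C, map_one, sub_eq_zero] at hAq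

lemma eq_one_of_isConj_pow_of_isSquare [IsAlgClosed K] [CharZero K] {p : ℕ} [hp : Fact p.Prime]
    (hn : 2 * Fintype.card n < p - 1) {A : Matrix n n K} (hA : A ^ p = 1)
    (hconj : ∀ m : ZMod p, m ≠ 0 → IsSquare m → IsConj A (A ^ m.val)) : A = 1 := by
  nontriviality Matrix n n K
  refine eq_one_of_pow_eq_one_of_spectrum_subset (Nat.cast_ne_zero.2 hp.out.ne_zero) hA
    fun μ hμ => eq_one_of_forall_isSquare_pow_mem (S := spectrum K A)
      ((Nat.mul_le_mul_left 2 A.card_spectrum_le).trans_lt hn) ?_ ?_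
  · simpa [hA, spectrum.one_eq] using spectrum.pow_mem_pow A p hμ
  · intro m hm hsq
    rw [spectrum.eq_of_isConj (hconj m hm hsq)]
    exact spectrum.pow_mem_pow A _ hμ

end Matrix

section UpperUni

variable (p : ℕ) [Fact p.Prime]

lemma coe_upperUni (t : ZMod p) :
    (upperUni p t : Matrix (Fin 2) (Fin 2) (ZMod p)) = !![1, t; 0, 1] :=
  rfl

lemma upperUni_zero : upperUni p 0 = 1 := by
  ext : 1
  simp [coe_upperUni, Matrix.one_fin_two]

lemma upperUni_mul (s t : ZMod p) : upperUni p s * upperUni p t = upperUni p (s + t) := by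
  ext : 1
  simp [coe_upperUni, add_comm]

lemma upperUni_one_pow (n : ℕ) : upperUni p 1 ^ n = upperUni p n := by
  induction n with
  | zero => rw [pow_zero, Nat.cast_zero, upperUni_zero]
  | succ n ih => rw [pow_succ, ih, upperUni_mul, Nat.cast_succ]

lemma isConj_upperUni_of_isSquare (m : ZMod p) (hm : m ≠ 0) (hsq : IsSquare m) :
    IsConj (upperUni p 1) (upperUni p m) := by
  obtain ⟨t, rfl⟩ := hsq
  have ht : t ≠ 0 := by rintro rfl; simp at hm
  let diag : Matrix.SpecialLinearGroup (Fin 2) (ZMod p) :=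
    ⟨!![t, 0; 0, t⁻¹], by simp [Matrix.det_fin_two_of, ht]⟩
  refine ⟨⟨diag, diag⁻¹, mul_inv_cancel diag, inv_mul_cancel diag⟩, ?_⟩
  apply Subtype.ext
  change !![t, 0; 0, t⁻¹] * !![1, 1; 0, 1] = !![1, t * t; 0, 1] * !![t, 0; 0, t⁻¹]
  simp [ht]

end UpperUni

theorem stmt15_general (p : ℕ) [Fact p.Prime] :
    (∀ m : ZMod p, m ≠ 0 → IsSquare m → IsConj (upperUni p 1) (upperUni p m)) ∧
    ∀ (d : ℕ), (d : ℝ) < ((p : ℝ) - 1) / 2 →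
      ∀ ρ : Matrix.SpecialLinearGroup (Fin 2) (ZMod p) →* Matrix.unitaryGroup (Fin d) ℂ,
        ρ (upperUni p 1) = 1 := by
  refine ⟨isConj_upperUni_of_isSquare p, fun d hd ρ => Subtype.ext ?_⟩
  have hd2 : 2 * Fintype.card (Fin d) < p - 1 := by
    have : ((2 * d + 1 : ℕ) : ℝ) < p := by push_cast; linarith
    have := Nat.cast_lt.1 this
    rw [Fintype.card_fin]
    omega
  let φ := (Matrix.unitaryGroup (Fin d) ℂ).subtype.comp ρ
  refine Matrix.eq_one_of_isConj_pow_of_isSquare (p := p) hd2 (A := φ (upperUni p 1)) ?_ ?_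
  · rw [← map_pow, upperUni_one_pow, ZMod.natCast_self, upperUni_zero, map_one]
  · intro m hm hsq
    rw [← map_pow, upperUni_one_pow, ZMod.natCast_zmod_val]
    exact φ.map_isConj (isConj_upperUni_of_isSquare p m hm hsq)

theorem stmt15 (p : ℕ) [Fact p.Prime] (hp : Odd p) :
    (∀ m : ZMod p, m ≠ 0 → IsSquare m → IsConj (upperUni p 1) (upperUni p m)) ∧
    ∀ (d : ℕ), (d : ℝ) < ((p : ℝ) - 1) / 2 →
      ∀ ρ : Matrix.SpecialLinearGroup (Fin 2) (ZMod p) →* Matrix.unitaryGroup (Fin d) ℂ,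
        ρ (upperUni p 1) = 1 :=
  stmt15_general p
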